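/- arXiv:1910.02130 — 3 statements merged into one kernel-verified Lean document; each statement's English description precedes it below -/
import Mathlib

section
/- Let s be a random variable on a finite probability space taking values in a finite set S, and let ω^1,…,ω^n be random variables taking values in finite sets that are mutually conditionally independent given s. For every subset ι₁ ⊆ {1,…,n} and every j ∉ ι₁, the marginal gain of the set function f(ι) = I(s; ∪_{i∈ι} ω^i) satisfies the identity f(ι₁∪{j}) − f(ι₁) = H(ω^j | ∪_{i∈ι₁} ω^i) − H(ω^j | s). -/
open Finset

/-- A probability mass function on a finite sample space `Ω`. -/
structure FinProb (Ω : Type*) [Fintype Ω] where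
  pr : Ω → ℝ
  nonneg : ∀ x, 0 ≤ pr x
  sum_one : ∑ x, pr x = 1

variable {Ω : Type*} [Fintype Ω]

/-- The probability that the random variable `X` takes the value `v`. -/
def FinProb.probEq (μ : FinProb Ω) {S : Type*} [DecidableEq S] (X : Ω → S) (v : S) : ℝ :=
  ∑ x, if X x = v then μ.pr x else 0

/-- Shannon entropy (natural logarithm) of a random variable with values in a finite type. -/
noncomputable def FinProb.entropy (μ : FinProb Ω) {S : Type*} [Fintype S] [DecidableEq S]
    (X : Ω → S) : ℝ :=
  ∑ v, Real.negMulLog (μ.probEq X v)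

/-- Conditional Shannon entropy `H(X|Y) = H(X,Y) - H(Y)`. -/
noncomputable def FinProb.condEntropy (μ : FinProb Ω) {S T : Type*} [Fintype S] [DecidableEq S]
    [Fintype T] [DecidableEq T] (X : Ω → S) (Y : Ω → T) : ℝ :=
  μ.entropy (fun x => (X x, Y x)) - μ.entropy Y

/-- Mutual information `I(X;Y) = H(X) - H(X|Y)`. -/
noncomputable def FinProb.mutualInfo (μ : FinProb Ω) {S T : Type*} [Fintype S] [DecidableEq S]
    [Fintype T] [DecidableEq T] (X : Ω → S) (Y : Ω → T) : ℝ :=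
  μ.entropy X - μ.condEntropy X Y

/-- The joint random variable `∪_{i ∈ ι} ω^i`, i.e. the tuple of the `ω^i` for `i ∈ ι`. -/
def tupleRV {n : ℕ} {W : Fin n → Type*} (ωs : ∀ i, Ω → W i) (ι : Finset (Fin n)) :
    Ω → (∀ i : ι, W i) :=
  fun x i => ωs i x

/-- The random variables `ω^1, …, ω^n` are mutually conditionally independent given `s` :
for all disjoint index sets `I, J ⊆ {1,…,n}` and all values `a`, `b`, `v`,
`Pr(ω_I = a, ω_J = b, s = v) · Pr(s = v) = Pr(ω_I = a, s = v) · Pr(ω_J = b, s = v)`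
(this is the product formula for the conditional probabilities, cleared of denominators). -/
def CondIndepGiven (μ : FinProb Ω) {S : Type*} [DecidableEq S] {n : ℕ}
    {W : Fin n → Type*} [∀ i, DecidableEq (W i)]
    (s : Ω → S) (ωs : ∀ i, Ω → W i) : Prop :=
  ∀ I J : Finset (Fin n), Disjoint I J →
    ∀ (a : ∀ i : I, W i) (b : ∀ j : J, W j) (v : S),
      μ.probEq (fun x => (tupleRV ωs I x, tupleRV ωs J x, s x)) (a, b, v) * μ.probEq s v =
        μ.probEq (fun x => (tupleRV ωs I x, s x)) (a, v) *
          μ.probEq (fun x => (tupleRV ωs J x, s x)) (b, v)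

/-- Kullback–Leibler divergence `D_KL(p‖q) = Σ_x p(x) log(p(x)/q(x))` (natural logarithm)
between finitely supported distributions. -/
noncomputable def klDiv {S : Type*} [Fintype S] (p q : S → ℝ) : ℝ :=
  ∑ x, p x * Real.log (p x / q x)

/-- The posterior distribution of `s` given the observation `Y = w` (Bayes' rule). -/
noncomputable def FinProb.posterior (μ : FinProb Ω) {S T : Type*} [DecidableEq S] [DecidableEq T]
    (s : Ω → S) (Y : Ω → T) (w : T) : S → ℝ :=
  fun v => μ.probEq (fun x => (s x, Y x)) (v, w) / μ.probEq Y w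

namespace FinProb
variable (μ : FinProb Ω)

lemma probEq_nonneg {S : Type*} [DecidableEq S] (X : Ω → S) (v : S) : 0 ≤ μ.probEq X v :=
  Finset.sum_nonneg fun x _ => by split <;> simp [μ.nonneg x]

lemma entropy_comp_injective {A B : Type*} [Fintype A] [DecidableEq A] [Fintype B] [DecidableEq B]
    (X : Ω → A) (g : A → B) (hg : Function.Injective g) :
    μ.entropy (fun x => g (X x)) = μ.entropy X := by
  have hval : ∀ a, μ.probEq (fun x => g (X x)) (g a) = μ.probEq X a := by
    intro a
    unfold probEq
    exact Finset.sum_congr rfl fun x _ => by simp [hg.eq_iff]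
  have hzero : ∀ b, b ∉ (Finset.univ.image g) → μ.probEq (fun x => g (X x)) b = 0 := by
    intro b hb
    refine Finset.sum_eq_zero fun x _ => ?_
    have : g (X x) ≠ b := fun h => hb (h ▸ Finset.mem_image_of_mem g (Finset.mem_univ _))
    simp [this]
  unfold entropy
  rw [← Finset.sum_subset (Finset.subset_univ (Finset.univ.image g))
      (fun b _ hb => by rw [hzero b hb, Real.negMulLog_zero]),
    Finset.sum_image (fun a _ a' _ h => hg h)]
  exact Finset.sum_congr rfl fun a _ => by rw [hval]

lemma probEq_marginal_fst {A C : Type*} [Fintype A] [DecidableEq A] [DecidableEq C]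
    (U : Ω → A) (V : Ω → C) (c : C) :
    μ.probEq V c = ∑ a, μ.probEq (fun x => (U x, V x)) (a, c) := by
  unfold probEq
  rw [Finset.sum_comm]
  refine Finset.sum_congr rfl fun x _ => ?_
  have h : ∀ a : A, (if (U x, V x) = (a, c) then μ.pr x else 0)
      = if U x = a then (if V x = c then μ.pr x else 0) else 0 := by
    intro a
    by_cases h1 : U x = a <;> by_cases h2 : V x = c <;> simp_all [Prod.ext_iff]
  rw [Finset.sum_congr rfl fun a _ => h a, Finset.sum_ite_eq Finset.univ (U x) _]
  simp

lemma probEq_marginal_mid {A B C : Type*} [Fintype B] [DecidableEq A] [DecidableEq B]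
    [DecidableEq C] (U : Ω → A) (Wv : Ω → B) (V : Ω → C) (a : A) (c : C) :
    μ.probEq (fun x => (U x, V x)) (a, c)
      = ∑ b, μ.probEq (fun x => (U x, Wv x, V x)) (a, b, c) := by
  unfold probEq
  rw [Finset.sum_comm]
  refine Finset.sum_congr rfl fun x _ => ?_
  have h : ∀ b : B, (if (U x, Wv x, V x) = (a, b, c) then μ.pr x else 0)
      = if Wv x = b then (if (U x, V x) = (a, c) then μ.pr x else 0) else 0 := by
    intro b
    by_cases h1 : Wv x = b <;> by_cases h2 : U x = a <;> by_cases h3 : V x = c <;>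
      simp_all [Prod.ext_iff]
  rw [Finset.sum_congr rfl fun b _ => h b, Finset.sum_ite_eq Finset.univ (Wv x) _]
  simp

end FinProb

lemma sum_negMulLog_condIndep {A B S : Type*} [Fintype A] [Fintype B] [Fintype S]
    (p3 : A → B → S → ℝ) (pX : A → S → ℝ) (pY : B → S → ℝ) (ps : S → ℝ)
    (h3 : ∀ a b v, 0 ≤ p3 a b v) (hXn : ∀ a v, 0 ≤ pX a v) (hYn : ∀ b v, 0 ≤ pY b v)
    (hXm : ∀ a v, pX a v = ∑ b, p3 a b v) (hYm : ∀ b v, pY b v = ∑ a, p3 a b v)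
    (hsm : ∀ v, ps v = ∑ a, ∑ b, p3 a b v)
    (h : ∀ a b v, p3 a b v * ps v = pX a v * pY b v) :
    (∑ a, ∑ b, ∑ v, Real.negMulLog (p3 a b v)) + (∑ v, Real.negMulLog (ps v))
      = (∑ a, ∑ v, Real.negMulLog (pX a v)) + (∑ b, ∑ v, Real.negMulLog (pY b v)) := by
  have key : ∀ a b v, Real.negMulLog (p3 a b v) + p3 a b v * (-Real.log (ps v)) =
      p3 a b v * (-Real.log (pX a v)) + p3 a b v * (-Real.log (pY b v)) := by
    intro a b v
    rcases eq_or_lt_of_le (h3 a b v) with h0 | h0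
    · rw [← h0]; simp
    · have hle : p3 a b v ≤ ps v := by
        rw [hsm v]
        calc p3 a b v ≤ ∑ b', p3 a b' v :=
              Finset.single_le_sum (fun b' _ => h3 a b' v) (Finset.mem_univ b)
          _ ≤ ∑ a', ∑ b', p3 a' b' v :=
              Finset.single_le_sum
                (fun a' _ => Finset.sum_nonneg fun b' _ => h3 a' b' v)
                (Finset.mem_univ a)
      have hpsV : 0 < ps v := lt_of_lt_of_le h0 hle
      have hprod : 0 < pX a v * pY b v := by rw [← h a b v]; exact mul_pos h0 hpsV
      have hXpos : 0 < pX a v :=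
        lt_of_le_of_ne (hXn a v) (fun hz => by rw [← hz, zero_mul] at hprod; exact lt_irrefl 0 hprod)
      have hYpos : 0 < pY b v :=
        lt_of_le_of_ne (hYn b v) (fun hz => by rw [← hz, mul_zero] at hprod; exact lt_irrefl 0 hprod)
      have hlog : Real.log (p3 a b v) + Real.log (ps v)
          = Real.log (pX a v) + Real.log (pY b v) := by
        rw [← Real.log_mul (ne_of_gt h0) (ne_of_gt hpsV),
          ← Real.log_mul (ne_of_gt hXpos) (ne_of_gt hYpos), h a b v]
      rw [Real.negMulLog]
      linear_combination (-(p3 a b v)) * hlog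
  have L2 : (∑ v, Real.negMulLog (ps v)) = ∑ a, ∑ b, ∑ v, p3 a b v * (-Real.log (ps v)) := by
    have step : (∑ v, Real.negMulLog (ps v))
        = ∑ v, ∑ a, ∑ b, p3 a b v * (-Real.log (ps v)) := by
      refine Finset.sum_congr rfl fun v _ => ?_
      calc Real.negMulLog (ps v) = ps v * (-Real.log (ps v)) := by rw [Real.negMulLog]; ring
        _ = (∑ a, ∑ b, p3 a b v) * (-Real.log (ps v)) :=
            congrArg (fun t => t * (-Real.log (ps v))) (hsm v)
        _ = ∑ a, ∑ b, p3 a b v * (-Real.log (ps v)) := by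
            rw [Finset.sum_mul]
            exact Finset.sum_congr rfl fun a _ => Finset.sum_mul ..
    rw [step, Finset.sum_comm]
    exact Finset.sum_congr rfl fun a _ => Finset.sum_comm
  have R1 : (∑ a, ∑ v, Real.negMulLog (pX a v))
      = ∑ a, ∑ b, ∑ v, p3 a b v * (-Real.log (pX a v)) := by
    refine Finset.sum_congr rfl fun a _ => ?_
    rw [Finset.sum_comm]
    refine Finset.sum_congr rfl fun v _ => ?_
    calc Real.negMulLog (pX a v) = pX a v * (-Real.log (pX a v)) := by
          rw [Real.negMulLog]; ring
      _ = (∑ b, p3 a b v) * (-Real.log (pX a v)) :=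
          congrArg (fun t => t * (-Real.log (pX a v))) (hXm a v)
      _ = ∑ b, p3 a b v * (-Real.log (pX a v)) := Finset.sum_mul ..
  have R2 : (∑ b, ∑ v, Real.negMulLog (pY b v))
      = ∑ a, ∑ b, ∑ v, p3 a b v * (-Real.log (pY b v)) := by
    have step : (∑ b, ∑ v, Real.negMulLog (pY b v))
        = ∑ b, ∑ a, ∑ v, p3 a b v * (-Real.log (pY b v)) := by
      refine Finset.sum_congr rfl fun b _ => ?_
      have h1 : (∑ v, Real.negMulLog (pY b v))
          = ∑ v, ∑ a, p3 a b v * (-Real.log (pY b v)) := by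
        refine Finset.sum_congr rfl fun v _ => ?_
        calc Real.negMulLog (pY b v) = pY b v * (-Real.log (pY b v)) := by
              rw [Real.negMulLog]; ring
          _ = (∑ a, p3 a b v) * (-Real.log (pY b v)) :=
              congrArg (fun t => t * (-Real.log (pY b v))) (hYm b v)
          _ = ∑ a, p3 a b v * (-Real.log (pY b v)) := Finset.sum_mul ..
      rw [h1, Finset.sum_comm]
    rw [step, Finset.sum_comm]
  rw [L2, R1, R2]
  simp only [← Finset.sum_add_distrib]
  exact Finset.sum_congr rfl fun a _ => Finset.sum_congr rfl fun b _ =>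
    Finset.sum_congr rfl fun v _ => key a b v

lemma FinProb.entropy_add_of_condIndep {Ω : Type*} [Fintype Ω] (μ : FinProb Ω)
    {A B S : Type*} [Fintype A] [DecidableEq A] [Fintype B] [DecidableEq B]
    [Fintype S] [DecidableEq S]
    (X : Ω → A) (Y : Ω → B) (s : Ω → S)
    (h : ∀ a b v, μ.probEq (fun x => (X x, Y x, s x)) (a, b, v) * μ.probEq s v =
      μ.probEq (fun x => (X x, s x)) (a, v) * μ.probEq (fun x => (Y x, s x)) (b, v)) :
    μ.entropy (fun x => (X x, Y x, s x)) + μ.entropy s =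
      μ.entropy (fun x => (X x, s x)) + μ.entropy (fun x => (Y x, s x)) := by
  have E3 : μ.entropy (fun x => (X x, Y x, s x))
      = ∑ a, ∑ b, ∑ v, Real.negMulLog (μ.probEq (fun x => (X x, Y x, s x)) (a, b, v)) := by
    unfold FinProb.entropy
    simp only [Fintype.sum_prod_type]
  have EX : μ.entropy (fun x => (X x, s x))
      = ∑ a, ∑ v, Real.negMulLog (μ.probEq (fun x => (X x, s x)) (a, v)) := by
    unfold FinProb.entropy
    simp only [Fintype.sum_prod_type]
  have EY : μ.entropy (fun x => (Y x, s x))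
      = ∑ b, ∑ v, Real.negMulLog (μ.probEq (fun x => (Y x, s x)) (b, v)) := by
    unfold FinProb.entropy
    simp only [Fintype.sum_prod_type]
  rw [E3, EX, EY]
  exact sum_negMulLog_condIndep
    (fun a b v => μ.probEq (fun x => (X x, Y x, s x)) (a, b, v))
    (fun a v => μ.probEq (fun x => (X x, s x)) (a, v))
    (fun b v => μ.probEq (fun x => (Y x, s x)) (b, v))
    (fun v => μ.probEq s v)
    (fun a b v => μ.probEq_nonneg _ _)
    (fun a v => μ.probEq_nonneg _ _)
    (fun b v => μ.probEq_nonneg _ _)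
    (fun a v => μ.probEq_marginal_mid X Y s a v)
    (fun b v => μ.probEq_marginal_fst X (fun x => (Y x, s x)) (b, v))
    (fun v => by
      show μ.probEq s v = ∑ a, ∑ b, μ.probEq (fun x => (X x, Y x, s x)) (a, b, v)
      rw [μ.probEq_marginal_fst X s v]
      exact Finset.sum_congr rfl fun a _ => μ.probEq_marginal_mid X Y s a v)
    h

/-- For mutually conditionally independent observations given `s`, the marginal
gain of the set function `f(ι) = I(s; ∪_{i∈ι} ω^i)` satisfies
`f(ι₁∪{j}) − f(ι₁) = H(ω^j | ∪_{i∈ι₁} ω^i) − H(ω^j | s)`. -/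
theorem mutualInfo_marginal_gain
    {Ω : Type*} [Fintype Ω] (μ : FinProb Ω)
    {S : Type*} [Fintype S] [DecidableEq S]
    {n : ℕ} {W : Fin n → Type*} [∀ i, Fintype (W i)] [∀ i, DecidableEq (W i)]
    (s : Ω → S) (ωs : ∀ i, Ω → W i)
    (hindep : CondIndepGiven μ s ωs)
    (ι₁ : Finset (Fin n)) (j : Fin n) (hj : j ∉ ι₁) :
    μ.mutualInfo s (tupleRV ωs (insert j ι₁)) - μ.mutualInfo s (tupleRV ωs ι₁) =
      μ.condEntropy (ωs j) (tupleRV ωs ι₁) - μ.condEntropy (ωs j) s := by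
  classical
  -- reindexing maps
  set e1 : (∀ i : (insert j ι₁ : Finset (Fin n)), W i) → W j × (∀ i : ι₁, W i) :=
    fun f => (f ⟨j, Finset.mem_insert_self j ι₁⟩,
      fun i => f ⟨i.1, Finset.mem_insert_of_mem i.2⟩) with he1def
  have he1 : Function.Injective e1 := by
    intro f g hf
    funext i
    rcases Finset.mem_insert.mp i.2 with h | h
    · have hi : i = ⟨j, Finset.mem_insert_self j ι₁⟩ := Subtype.ext h
      rw [hi]
      exact congrArg Prod.fst hf
    · exact congrFun (congrArg Prod.snd hf) ⟨i.1, h⟩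
  set e2 : S × (∀ i : (insert j ι₁ : Finset (Fin n)), W i) →
      W j × ((∀ i : ι₁, W i) × S) :=
    fun p => ((e1 p.2).1, ((e1 p.2).2, p.1)) with he2def
  have he2 : Function.Injective e2 := by
    intro p q hpq
    have h1 : e1 p.2 = e1 q.2 :=
      Prod.ext (congrArg (fun t => t.1) hpq) (congrArg (fun t => t.2.1) hpq)
    exact Prod.ext (congrArg (fun t => t.2.2) hpq) (he1 h1)
  set g2 : (∀ i : ({j} : Finset (Fin n)), W i) → W j :=
    fun f => f ⟨j, Finset.mem_singleton_self j⟩ with hg2def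
  have hg2 : Function.Injective g2 := by
    intro f g hf
    funext i
    have hi : i = ⟨j, Finset.mem_singleton_self j⟩ := Subtype.ext (Finset.mem_singleton.mp i.2)
    rw [hi]
    exact hf
  -- entropy relabelings
  have hZ : μ.entropy (fun x => (ωs j x, tupleRV ωs ι₁ x))
      = μ.entropy (tupleRV ωs (insert j ι₁)) :=
    μ.entropy_comp_injective (tupleRV ωs (insert j ι₁)) e1 he1
  have hsZ : μ.entropy (fun x => (ωs j x, tupleRV ωs ι₁ x, s x))
      = μ.entropy (fun x => (s x, tupleRV ωs (insert j ι₁) x)) :=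
    μ.entropy_comp_injective (fun x => (s x, tupleRV ωs (insert j ι₁) x)) e2 he2
  have hsY : μ.entropy (fun x => (tupleRV ωs ι₁ x, s x))
      = μ.entropy (fun x => (s x, tupleRV ωs ι₁ x)) :=
    μ.entropy_comp_injective (fun x => (s x, tupleRV ωs ι₁ x)) Prod.swap
      Prod.swap_injective
  have hA : μ.entropy (fun x => (ωs j x, tupleRV ωs ι₁ x, s x))
      = μ.entropy (fun x => (tupleRV ωs {j} x, tupleRV ωs ι₁ x, s x)) :=
    μ.entropy_comp_injective (fun x => (tupleRV ωs {j} x, tupleRV ωs ι₁ x, s x))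
      (Prod.map g2 id) (hg2.prodMap Function.injective_id)
  have hB : μ.entropy (fun x => (ωs j x, s x))
      = μ.entropy (fun x => (tupleRV ωs {j} x, s x)) :=
    μ.entropy_comp_injective (fun x => (tupleRV ωs {j} x, s x))
      (Prod.map g2 id) (hg2.prodMap Function.injective_id)
  -- conditional independence
  have hdisj : Disjoint ({j} : Finset (Fin n)) ι₁ := Finset.disjoint_singleton_left.mpr hj
  have E1 : μ.entropy (fun x => (tupleRV ωs {j} x, tupleRV ωs ι₁ x, s x)) + μ.entropy s =
      μ.entropy (fun x => (tupleRV ωs {j} x, s x))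
        + μ.entropy (fun x => (tupleRV ωs ι₁ x, s x)) :=
    μ.entropy_add_of_condIndep (tupleRV ωs {j}) (tupleRV ωs ι₁) s
      (fun a b v => hindep {j} ι₁ hdisj a b v)
  simp only [FinProb.mutualInfo, FinProb.condEntropy]
  linarith [hZ, hsZ, hsY, hA, hB, E1]
end

section
/- Let s be a random variable on a finite probability space taking values in a finite set S, and let ω^1,…,ω^n be random variables taking values in finite sets that are mutually conditionally independent given s. Then the set function f(ι) = I(s; ∪_{i∈ι} ω^i) is submodular: for all subsets ι₁ ⊆ ι₂ ⊂ {1,…,n} and every j ∈ {1,…,n}\ι₂, f(ι₁∪{j}) − f(ι₁) ≥ f(ι₂∪{j}) − f(ι₂). -/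
open Finset

variable {Ω : Type*} [Fintype Ω]

namespace FinProb
variable (μ : FinProb Ω)

set_option linter.unusedSectionVars false

lemma sum_probEq {S : Type*} [Fintype S] [DecidableEq S] (X : Ω → S) :
    ∑ v, μ.probEq X v = 1 := by
  unfold probEq
  rw [Finset.sum_comm]
  simp [μ.sum_one]

lemma probEq_comp_inj {S T : Type*} [DecidableEq S] [DecidableEq T]
    (X : Ω → S) {g : S → T} (hg : Function.Injective g) (v : S) :
    μ.probEq (fun x => g (X x)) (g v) = μ.probEq X v := by
  unfold probEq
  simp [hg.eq_iff]

lemma probEq_comp_eq_zero {S T : Type*} [DecidableEq S] [DecidableEq T]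
    (X : Ω → S) (g : S → T) (w : T) (hw : ∀ v, g v ≠ w) :
    μ.probEq (fun x => g (X x)) w = 0 := by
  unfold probEq
  simp [hw]

lemma entropy_comp_inj {S T : Type*} [Fintype S] [DecidableEq S] [Fintype T] [DecidableEq T]
    (X : Ω → S) {g : S → T} (hg : Function.Injective g) :
    μ.entropy (fun x => g (X x)) = μ.entropy X := by
  unfold entropy
  rw [← Finset.sum_subset (Finset.subset_univ (Finset.univ.image g))]
  · rw [Finset.sum_image (fun a _ b _ h => hg h)]
    exact Finset.sum_congr rfl fun v _ => by rw [μ.probEq_comp_inj X hg]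
  · intro w _ hw
    rw [μ.probEq_comp_eq_zero X g w, Real.negMulLog_zero]
    intro v hv
    exact hw (Finset.mem_image.mpr ⟨v, Finset.mem_univ v, hv⟩)


variable {A B C : Type*} [Fintype A] [DecidableEq A] [Fintype B] [DecidableEq B]
  [Fintype C] [DecidableEq C]

lemma marg_pair_fst (X : Ω → A) (Y : Ω → B) (a : A) :
    ∑ b, μ.probEq (fun x => (X x, Y x)) (a, b) = μ.probEq X a := by
  unfold probEq
  rw [Finset.sum_comm]
  refine Finset.sum_congr rfl fun x _ => ?_
  simp only [Prod.ext_iff]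
  by_cases h : X x = a <;> simp [h, Finset.sum_ite_eq]

lemma marg_pair_snd (X : Ω → A) (Y : Ω → B) (b : B) :
    ∑ a, μ.probEq (fun x => (X x, Y x)) (a, b) = μ.probEq Y b := by
  unfold probEq
  rw [Finset.sum_comm]
  refine Finset.sum_congr rfl fun x _ => ?_
  simp only [Prod.ext_iff]
  by_cases h : Y x = b <;> simp [h, Finset.sum_ite_eq]

lemma marg3_c (X : Ω → A) (Y : Ω → B) (Z : Ω → C) (a : A) (b : B) :
    ∑ c, μ.probEq (fun x => (X x, Y x, Z x)) (a, b, c) = μ.probEq (fun x => (X x, Y x)) (a, b) := by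
  unfold probEq
  rw [Finset.sum_comm]
  refine Finset.sum_congr rfl fun x _ => ?_
  simp only [Prod.ext_iff]
  by_cases h1 : X x = a <;> by_cases h2 : Y x = b <;> simp [h1, h2, Finset.sum_ite_eq]

lemma marg3_b (X : Ω → A) (Y : Ω → B) (Z : Ω → C) (a : A) (c : C) :
    ∑ b, μ.probEq (fun x => (X x, Y x, Z x)) (a, b, c) = μ.probEq (fun x => (X x, Z x)) (a, c) := by
  unfold probEq
  rw [Finset.sum_comm]
  refine Finset.sum_congr rfl fun x _ => ?_
  simp only [Prod.ext_iff]
  by_cases h1 : X x = a <;> by_cases h2 : Z x = c <;> simp [h1, h2, Finset.sum_ite_eq]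

lemma marg3_a (X : Ω → A) (Y : Ω → B) (Z : Ω → C) (b : B) (c : C) :
    ∑ a, μ.probEq (fun x => (X x, Y x, Z x)) (a, b, c) = μ.probEq (fun x => (Y x, Z x)) (b, c) := by
  unfold probEq
  rw [Finset.sum_comm]
  refine Finset.sum_congr rfl fun x _ => ?_
  simp only [Prod.ext_iff]
  by_cases h1 : Y x = b <;> by_cases h2 : Z x = c <;> simp [h1, h2, Finset.sum_ite_eq]


set_option linter.unusedSectionVars false

lemma sum3_swap_bc (f : A → B → C → ℝ) :
    ∑ a, ∑ c, ∑ b, f a b c = ∑ a, ∑ b, ∑ c, f a b c :=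
  Finset.sum_congr rfl fun _ _ => Finset.sum_comm

lemma sum3_rot (f : A → B → C → ℝ) :
    ∑ c, ∑ a, ∑ b, f a b c = ∑ a, ∑ b, ∑ c, f a b c := by
  rw [Finset.sum_comm]
  exact sum3_swap_bc f

lemma sum3_rot2 (f : A → B → C → ℝ) :
    ∑ b, ∑ c, ∑ a, f a b c = ∑ a, ∑ b, ∑ c, f a b c := by
  rw [Finset.sum_comm, ← sum3_rot]
  exact Finset.sum_congr rfl fun _ _ => Finset.sum_comm

lemma entropy_triple_expand (X : Ω → A) (Y : Ω → B) (Z : Ω → C) :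
    μ.entropy (fun x => (X x, Y x, Z x)) =
      ∑ a, ∑ b, ∑ c, Real.negMulLog (μ.probEq (fun x => (X x, Y x, Z x)) (a, b, c)) := by
  unfold entropy
  rw [Fintype.sum_prod_type]
  exact Finset.sum_congr rfl fun a _ => Fintype.sum_prod_type _

lemma entropy_XZ_expand (X : Ω → A) (Y : Ω → B) (Z : Ω → C) :
    μ.entropy (fun x => (X x, Z x)) =
      ∑ a, ∑ b, ∑ c, -(μ.probEq (fun x => (X x, Y x, Z x)) (a, b, c) *
        Real.log (μ.probEq (fun x => (X x, Z x)) (a, c))) := by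
  rw [← sum3_swap_bc]
  unfold entropy
  rw [Fintype.sum_prod_type]
  refine Finset.sum_congr rfl fun a _ => Finset.sum_congr rfl fun c _ => ?_
  calc Real.negMulLog (μ.probEq (fun x => (X x, Z x)) (a, c))
      = -((∑ b, μ.probEq (fun x => (X x, Y x, Z x)) (a, b, c)) *
          Real.log (μ.probEq (fun x => (X x, Z x)) (a, c))) := by
        rw [μ.marg3_b X Y Z a c, Real.negMulLog, neg_mul]
    _ = ∑ b, -(μ.probEq (fun x => (X x, Y x, Z x)) (a, b, c) *
          Real.log (μ.probEq (fun x => (X x, Z x)) (a, c))) := by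
        rw [Finset.sum_mul, ← Finset.sum_neg_distrib]

lemma entropy_YZ_expand (X : Ω → A) (Y : Ω → B) (Z : Ω → C) :
    μ.entropy (fun x => (Y x, Z x)) =
      ∑ a, ∑ b, ∑ c, -(μ.probEq (fun x => (X x, Y x, Z x)) (a, b, c) *
        Real.log (μ.probEq (fun x => (Y x, Z x)) (b, c))) := by
  rw [← sum3_rot2]
  unfold entropy
  rw [Fintype.sum_prod_type]
  refine Finset.sum_congr rfl fun b _ => Finset.sum_congr rfl fun c _ => ?_
  calc Real.negMulLog (μ.probEq (fun x => (Y x, Z x)) (b, c))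
      = -((∑ a, μ.probEq (fun x => (X x, Y x, Z x)) (a, b, c)) *
          Real.log (μ.probEq (fun x => (Y x, Z x)) (b, c))) := by
        rw [μ.marg3_a X Y Z b c, Real.negMulLog, neg_mul]
    _ = ∑ a, -(μ.probEq (fun x => (X x, Y x, Z x)) (a, b, c) *
          Real.log (μ.probEq (fun x => (Y x, Z x)) (b, c))) := by
        rw [Finset.sum_mul, ← Finset.sum_neg_distrib]

lemma entropy_Z_expand (X : Ω → A) (Y : Ω → B) (Z : Ω → C) :
    μ.entropy Z =
      ∑ a, ∑ b, ∑ c, -(μ.probEq (fun x => (X x, Y x, Z x)) (a, b, c) *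
        Real.log (μ.probEq Z c)) := by
  rw [← sum3_rot]
  unfold entropy
  refine Finset.sum_congr rfl fun c _ => ?_
  have hZ : μ.probEq Z c = ∑ a, ∑ b, μ.probEq (fun x => (X x, Y x, Z x)) (a, b, c) := by
    rw [Finset.sum_comm]
    rw [show (∑ b, ∑ a, μ.probEq (fun x => (X x, Y x, Z x)) (a, b, c))
        = ∑ b, μ.probEq (fun x => (Y x, Z x)) (b, c) from
      Finset.sum_congr rfl fun b _ => μ.marg3_a X Y Z b c]
    exact (μ.marg_pair_snd Y Z c).symm
  calc Real.negMulLog (μ.probEq Z c)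
      = -((∑ a, ∑ b, μ.probEq (fun x => (X x, Y x, Z x)) (a, b, c)) *
          Real.log (μ.probEq Z c)) := by rw [← hZ, Real.negMulLog, neg_mul]
    _ = ∑ a, ∑ b, -(μ.probEq (fun x => (X x, Y x, Z x)) (a, b, c) *
          Real.log (μ.probEq Z c)) := by
        rw [Finset.sum_mul, ← Finset.sum_neg_distrib]
        refine Finset.sum_congr rfl fun a _ => ?_
        rw [Finset.sum_mul, ← Finset.sum_neg_distrib]

/-- marginal lower bounds -/
lemma le_marg3_b (X : Ω → A) (Y : Ω → B) (Z : Ω → C) (a : A) (b : B) (c : C) :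
    μ.probEq (fun x => (X x, Y x, Z x)) (a, b, c) ≤ μ.probEq (fun x => (X x, Z x)) (a, c) := by
  rw [← μ.marg3_b X Y Z a c]
  exact Finset.single_le_sum (f := fun b => μ.probEq (fun x => (X x, Y x, Z x)) (a, b, c))
    (fun b _ => μ.probEq_nonneg _ _) (Finset.mem_univ b)

lemma le_marg3_a (X : Ω → A) (Y : Ω → B) (Z : Ω → C) (a : A) (b : B) (c : C) :
    μ.probEq (fun x => (X x, Y x, Z x)) (a, b, c) ≤ μ.probEq (fun x => (Y x, Z x)) (b, c) := by
  rw [← μ.marg3_a X Y Z b c]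
  exact Finset.single_le_sum (f := fun a => μ.probEq (fun x => (X x, Y x, Z x)) (a, b, c))
    (fun a _ => μ.probEq_nonneg _ _) (Finset.mem_univ a)

lemma le_marg_pair_snd (X : Ω → A) (Y : Ω → B) (a : A) (b : B) :
    μ.probEq (fun x => (X x, Y x)) (a, b) ≤ μ.probEq Y b := by
  rw [← μ.marg_pair_snd X Y b]
  exact Finset.single_le_sum (f := fun a => μ.probEq (fun x => (X x, Y x)) (a, b))
    (fun a _ => μ.probEq_nonneg _ _) (Finset.mem_univ a)

lemma le_marg_pair_fst (X : Ω → A) (Y : Ω → B) (a : A) (b : B) :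
    μ.probEq (fun x => (X x, Y x)) (a, b) ≤ μ.probEq X a := by
  rw [← μ.marg_pair_fst X Y a]
  exact Finset.single_le_sum (f := fun b => μ.probEq (fun x => (X x, Y x)) (a, b))
    (fun b _ => μ.probEq_nonneg _ _) (Finset.mem_univ b)


/-- If `X` and `Y` are conditionally independent given `Z` (product formula), then
`H(X,Y,Z) + H(Z) = H(X,Z) + H(Y,Z)`. -/
lemma entropy_triple_of_condIndep (X : Ω → A) (Y : Ω → B) (Z : Ω → C)
    (h : ∀ a b c, μ.probEq (fun x => (X x, Y x, Z x)) (a, b, c) * μ.probEq Z c =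
      μ.probEq (fun x => (X x, Z x)) (a, c) * μ.probEq (fun x => (Y x, Z x)) (b, c)) :
    μ.entropy (fun x => (X x, Y x, Z x)) + μ.entropy Z =
      μ.entropy (fun x => (X x, Z x)) + μ.entropy (fun x => (Y x, Z x)) := by
  rw [μ.entropy_triple_expand X Y Z, μ.entropy_Z_expand X Y Z,
    μ.entropy_XZ_expand X Y Z, μ.entropy_YZ_expand X Y Z,
    ← Finset.sum_add_distrib, ← Finset.sum_add_distrib]
  refine Finset.sum_congr rfl fun a _ => ?_
  rw [← Finset.sum_add_distrib, ← Finset.sum_add_distrib]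
  refine Finset.sum_congr rfl fun b _ => ?_
  rw [← Finset.sum_add_distrib, ← Finset.sum_add_distrib]
  refine Finset.sum_congr rfl fun c _ => ?_
  rcases eq_or_lt_of_le (μ.probEq_nonneg (fun x => (X x, Y x, Z x)) (a, b, c)) with h0 | h0
  · rw [← h0]
    simp [Real.negMulLog_zero]
  · have hxz : 0 < μ.probEq (fun x => (X x, Z x)) (a, c) :=
      lt_of_lt_of_le h0 (μ.le_marg3_b X Y Z a b c)
    have hyz : 0 < μ.probEq (fun x => (Y x, Z x)) (b, c) :=
      lt_of_lt_of_le h0 (μ.le_marg3_a X Y Z a b c)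
    have hz : 0 < μ.probEq Z c := lt_of_lt_of_le hyz (μ.le_marg_pair_snd Y Z b c)
    have hlog : Real.log (μ.probEq (fun x => (X x, Y x, Z x)) (a, b, c)) + Real.log (μ.probEq Z c) =
        Real.log (μ.probEq (fun x => (X x, Z x)) (a, c)) +
          Real.log (μ.probEq (fun x => (Y x, Z x)) (b, c)) := by
      rw [← Real.log_mul h0.ne' hz.ne', ← Real.log_mul hxz.ne' hyz.ne', h a b c]
    rw [Real.negMulLog]
    linear_combination (-(μ.probEq (fun x => (X x, Y x, Z x)) (a, b, c))) * hlog

/-- Submodularity of entropy: `H(X,Y) + H(Y,Z) ≥ H(X,Y,Z) + H(Y)`. -/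
lemma entropy_submodular (X : Ω → A) (Y : Ω → B) (Z : Ω → C) :
    μ.entropy (fun x => (X x, Y x, Z x)) + μ.entropy Y ≤
      μ.entropy (fun x => (X x, Y x)) + μ.entropy (fun x => (Y x, Z x)) := by
  have hXY : μ.entropy (fun x => (X x, Y x)) =
      ∑ a, ∑ b, ∑ c, -(μ.probEq (fun x => (X x, Y x, Z x)) (a, b, c) *
        Real.log (μ.probEq (fun x => (X x, Y x)) (a, b))) := by
    unfold entropy
    rw [Fintype.sum_prod_type]
    refine Finset.sum_congr rfl fun a _ => Finset.sum_congr rfl fun b _ => ?_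
    calc Real.negMulLog (μ.probEq (fun x => (X x, Y x)) (a, b))
        = -((∑ c, μ.probEq (fun x => (X x, Y x, Z x)) (a, b, c)) *
            Real.log (μ.probEq (fun x => (X x, Y x)) (a, b))) := by
          rw [μ.marg3_c X Y Z a b, Real.negMulLog, neg_mul]
      _ = ∑ c, -(μ.probEq (fun x => (X x, Y x, Z x)) (a, b, c) *
            Real.log (μ.probEq (fun x => (X x, Y x)) (a, b))) := by
          rw [Finset.sum_mul, ← Finset.sum_neg_distrib]
  have ht : ∀ b : B, μ.probEq Y b = ∑ c, ∑ a, μ.probEq (fun x => (X x, Y x, Z x)) (a, b, c) := by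
    intro b
    rw [show (∑ c, ∑ a, μ.probEq (fun x => (X x, Y x, Z x)) (a, b, c))
        = ∑ c, μ.probEq (fun x => (Y x, Z x)) (b, c) from
      Finset.sum_congr rfl fun c _ => μ.marg3_a X Y Z b c]
    exact (μ.marg_pair_fst Y Z b).symm
  have hY : μ.entropy Y =
      ∑ a, ∑ b, ∑ c, -(μ.probEq (fun x => (X x, Y x, Z x)) (a, b, c) *
        Real.log (μ.probEq Y b)) := by
    rw [show (∑ a, ∑ b, ∑ c, -(μ.probEq (fun x => (X x, Y x, Z x)) (a, b, c) *
        Real.log (μ.probEq Y b))) = ∑ b, ∑ c, ∑ a, -(μ.probEq (fun x => (X x, Y x, Z x)) (a, b, c) *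
        Real.log (μ.probEq Y b)) from (sum3_rot2 _).symm]
    unfold entropy
    refine Finset.sum_congr rfl fun b _ => ?_
    calc Real.negMulLog (μ.probEq Y b)
        = -((∑ c, ∑ a, μ.probEq (fun x => (X x, Y x, Z x)) (a, b, c)) *
            Real.log (μ.probEq Y b)) := by rw [← ht b, Real.negMulLog, neg_mul]
      _ = ∑ c, ∑ a, -(μ.probEq (fun x => (X x, Y x, Z x)) (a, b, c) *
            Real.log (μ.probEq Y b)) := by
          rw [Finset.sum_mul, ← Finset.sum_neg_distrib]
          refine Finset.sum_congr rfl fun c _ => ?_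
          rw [Finset.sum_mul, ← Finset.sum_neg_distrib]
  -- abbreviations via the goal rewriting
  rw [μ.entropy_triple_expand X Y Z, hY, hXY, μ.entropy_YZ_expand X Y Z]
  simp only [← Finset.sum_add_distrib]
  -- key pointwise inequality
  have hple : ∀ a b c, μ.probEq (fun x => (X x, Y x, Z x)) (a, b, c) ≤
      μ.probEq (fun x => (X x, Y x)) (a, b) := by
    intro a b c
    rw [← μ.marg3_c X Y Z a b]
    exact Finset.single_le_sum (f := fun c => μ.probEq (fun x => (X x, Y x, Z x)) (a, b, c))
      (fun c _ => μ.probEq_nonneg _ _) (Finset.mem_univ c)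
  have key : ∀ a b c,
      Real.negMulLog (μ.probEq (fun x => (X x, Y x, Z x)) (a, b, c)) +
        -(μ.probEq (fun x => (X x, Y x, Z x)) (a, b, c) * Real.log (μ.probEq Y b)) +
        (μ.probEq (fun x => (X x, Y x, Z x)) (a, b, c) -
          μ.probEq (fun x => (X x, Y x)) (a, b) * μ.probEq (fun x => (Y x, Z x)) (b, c) /
            μ.probEq Y b) ≤
      -(μ.probEq (fun x => (X x, Y x, Z x)) (a, b, c) *
          Real.log (μ.probEq (fun x => (X x, Y x)) (a, b))) +
        -(μ.probEq (fun x => (X x, Y x, Z x)) (a, b, c) *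
          Real.log (μ.probEq (fun x => (Y x, Z x)) (b, c))) := by
    intro a b c
    set p := μ.probEq (fun x => (X x, Y x, Z x)) (a, b, c) with hpdef
    set q := μ.probEq (fun x => (X x, Y x)) (a, b) with hqdef
    set r := μ.probEq (fun x => (Y x, Z x)) (b, c) with hrdef
    set t := μ.probEq Y b with htdef
    have hq0 : 0 ≤ q := μ.probEq_nonneg _ _
    have hr0 : 0 ≤ r := μ.probEq_nonneg _ _
    have ht0 : 0 ≤ t := μ.probEq_nonneg _ _
    rcases eq_or_lt_of_le (μ.probEq_nonneg (fun x => (X x, Y x, Z x)) (a, b, c)) with h0 | h0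
    · rw [← hpdef] at h0
      rw [← h0]
      simp only [Real.negMulLog_zero, zero_mul, neg_zero, add_zero, zero_add, zero_sub,
        neg_mul, sub_zero]
      simp only [zero_sub, neg_nonpos, add_zero]
      have : 0 ≤ q * r / t := div_nonneg (mul_nonneg hq0 hr0) ht0
      linarith
    · rw [← hpdef] at h0
      have hq : 0 < q := lt_of_lt_of_le h0 (hple a b c)
      have hr : 0 < r := lt_of_lt_of_le h0 (μ.le_marg3_a X Y Z a b c)
      have ht : 0 < t := lt_of_lt_of_le hr (μ.le_marg_pair_fst Y Z b c)
      have hu : 0 < q * r / t := div_pos (mul_pos hq hr) ht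
      have hlu : Real.log (q * r / t) = Real.log q + Real.log r - Real.log t := by
        rw [Real.log_div (mul_pos hq hr).ne' ht.ne', Real.log_mul hq.ne' hr.ne']
      have hl : Real.log (q * r / t / p) ≤ q * r / t / p - 1 :=
        Real.log_le_sub_one_of_pos (div_pos hu h0)
      rw [Real.log_div hu.ne' h0.ne'] at hl
      have h2 : p * (Real.log (q * r / t) - Real.log p) ≤ p * (q * r / t / p - 1) :=
        mul_le_mul_of_nonneg_left hl h0.le
      have h3 : p * (q * r / t / p - 1) = q * r / t - p := by field_simp
      rw [h3, hlu] at h2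
      rw [Real.negMulLog]
      nlinarith [h2]
  calc (∑ a, ∑ b, ∑ c, (Real.negMulLog (μ.probEq (fun x => (X x, Y x, Z x)) (a, b, c)) +
        -(μ.probEq (fun x => (X x, Y x, Z x)) (a, b, c) * Real.log (μ.probEq Y b))))
      = (∑ a, ∑ b, ∑ c, (Real.negMulLog (μ.probEq (fun x => (X x, Y x, Z x)) (a, b, c)) +
          -(μ.probEq (fun x => (X x, Y x, Z x)) (a, b, c) * Real.log (μ.probEq Y b)) +
          (μ.probEq (fun x => (X x, Y x, Z x)) (a, b, c) -
            μ.probEq (fun x => (X x, Y x)) (a, b) * μ.probEq (fun x => (Y x, Z x)) (b, c) /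
              μ.probEq Y b))) := by
        have hp1 : (∑ a, ∑ b, ∑ c, μ.probEq (fun x => (X x, Y x, Z x)) (a, b, c)) = 1 := by
          have := μ.sum_probEq (fun x => (X x, Y x, Z x))
          rw [Fintype.sum_prod_type] at this
          simp only [Fintype.sum_prod_type] at this
          exact this
        have hu1 : (∑ a, ∑ b, ∑ c, μ.probEq (fun x => (X x, Y x)) (a, b) *
            μ.probEq (fun x => (Y x, Z x)) (b, c) / μ.probEq Y b) = 1 := by
          have hinner : ∀ a b, (∑ c, μ.probEq (fun x => (X x, Y x)) (a, b) *
              μ.probEq (fun x => (Y x, Z x)) (b, c) / μ.probEq Y b) =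
              μ.probEq (fun x => (X x, Y x)) (a, b) := by
            intro a b
            rcases eq_or_ne (μ.probEq Y b) 0 with h0 | h0
            · have hqz : μ.probEq (fun x => (X x, Y x)) (a, b) = 0 :=
                le_antisymm (h0 ▸ μ.le_marg_pair_snd X Y a b) (μ.probEq_nonneg _ _)
              simp [hqz]
            · rw [show (∑ c, μ.probEq (fun x => (X x, Y x)) (a, b) *
                  μ.probEq (fun x => (Y x, Z x)) (b, c) / μ.probEq Y b)
                  = (∑ c, μ.probEq (fun x => (Y x, Z x)) (b, c)) *
                    (μ.probEq (fun x => (X x, Y x)) (a, b) / μ.probEq Y b) by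
                rw [Finset.sum_mul]
                exact Finset.sum_congr rfl fun c _ => by ring]
              rw [μ.marg_pair_fst Y Z b]
              field_simp
            
          rw [Finset.sum_congr rfl fun a _ => Finset.sum_congr rfl fun b _ => hinner a b]
          have := μ.sum_probEq (fun x => (X x, Y x))
          rw [Fintype.sum_prod_type] at this
          exact this.symm ▸ this
        simp only [Finset.sum_add_distrib, Finset.sum_sub_distrib]
        rw [hp1, hu1]
        ring
    _ ≤ (∑ a, ∑ b, ∑ c, (-(μ.probEq (fun x => (X x, Y x, Z x)) (a, b, c) *
          Real.log (μ.probEq (fun x => (X x, Y x)) (a, b))) +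
          -(μ.probEq (fun x => (X x, Y x, Z x)) (a, b, c) *
          Real.log (μ.probEq (fun x => (Y x, Z x)) (b, c))))) := by
        refine Finset.sum_le_sum fun a _ => Finset.sum_le_sum fun b _ =>
          Finset.sum_le_sum fun c _ => key a b c


variable {n : ℕ} {W : Fin n → Type*} [∀ i, Fintype (W i)] [∀ i, DecidableEq (W i)]

lemma entropy_pair_comm (X : Ω → A) (Y : Ω → B) :
    μ.entropy (fun x => (X x, Y x)) = μ.entropy (fun x => (Y x, X x)) :=
  (μ.entropy_comp_inj (fun x => (X x, Y x)) Prod.swap_injective).symm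

set_option maxHeartbeats 1000000 in
/-- Entropy of a tuple over a union, rearranged through restriction (injective). -/
lemma entropy_union_pair (ωs : ∀ i, Ω → W i) (u t : Finset (Fin n)) (Zc : Ω → C) :
    μ.entropy (fun x => (tupleRV ωs (u ∪ t) x, Zc x)) - μ.entropy (tupleRV ωs (u ∪ t)) ≤
      μ.entropy (fun x => (tupleRV ωs u x, Zc x)) - μ.entropy (tupleRV ωs u) := by
  have hg1 : Function.Injective (fun f : (∀ i : ↥(u ∪ t), W i) =>
      ((fun i : ↥t => f ⟨i.1, Finset.mem_union_right u i.2⟩),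
       (fun i : ↥u => f ⟨i.1, Finset.mem_union_left t i.2⟩))) := by
    intro f₁ f₂ h
    obtain ⟨h1, h2⟩ := Prod.mk.injEq .. ▸ h
    funext i
    rcases Finset.mem_union.mp i.2 with hi | hi
    · have := congrFun h2 ⟨i.1, hi⟩
      simpa [Subtype.ext_iff] using this
    · have := congrFun h1 ⟨i.1, hi⟩
      simpa [Subtype.ext_iff] using this
  have hg2 : Function.Injective (fun p : (∀ i : ↥(u ∪ t), W i) × C =>
      ((fun i : ↥t => p.1 ⟨i.1, Finset.mem_union_right u i.2⟩),
       (fun i : ↥u => p.1 ⟨i.1, Finset.mem_union_left t i.2⟩), p.2)) := by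
    intro p₁ p₂ h
    simp only [Prod.mk.injEq] at h
    exact Prod.ext (hg1 (Prod.mk.injEq .. ▸ ⟨h.1, h.2.1⟩ : _)) h.2.2
  have e1 : μ.entropy (tupleRV ωs (u ∪ t)) =
      μ.entropy (fun x => (tupleRV ωs t x, tupleRV ωs u x)) :=
    (μ.entropy_comp_inj (tupleRV ωs (u ∪ t)) hg1).symm
  have e2 : μ.entropy (fun x => (tupleRV ωs (u ∪ t) x, Zc x)) =
      μ.entropy (fun x => (tupleRV ωs t x, tupleRV ωs u x, Zc x)) :=
    (μ.entropy_comp_inj (fun x => (tupleRV ωs (u ∪ t) x, Zc x)) hg2).symm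
  have hsub := μ.entropy_submodular (tupleRV ωs t) (tupleRV ωs u) Zc
  have hswap : μ.entropy (fun x => (tupleRV ωs t x, tupleRV ωs u x)) =
      μ.entropy (fun x => (tupleRV ωs u x, tupleRV ωs t x)) :=
    μ.entropy_pair_comm (tupleRV ωs t) (tupleRV ωs u)
  linarith [hsub, e1, e2]


set_option maxHeartbeats 1000000 in
lemma mutualInfo_insert_diff {S : Type*} [Fintype S] [DecidableEq S]
    (s : Ω → S) (ωs : ∀ i, Ω → W i) (hindep : CondIndepGiven μ s ωs)
    (ι : Finset (Fin n)) (j : Fin n) (hj : j ∉ ι) :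
    μ.mutualInfo s (tupleRV ωs (insert j ι)) - μ.mutualInfo s (tupleRV ωs ι) =
      (μ.entropy (fun x => (tupleRV ωs ι x, ωs j x)) - μ.entropy (tupleRV ωs ι))
        - (μ.entropy (fun x => (ωs j x, s x)) - μ.entropy s) := by
  have hg1 : Function.Injective (fun f : (∀ i : ↥(insert j ι), W i) =>
      ((fun i : ↥ι => f ⟨i.1, Finset.mem_insert_of_mem i.2⟩),
       f ⟨j, Finset.mem_insert_self j ι⟩)) := by
    intro f₁ f₂ h
    simp only [Prod.mk.injEq] at h
    funext i
    rcases Finset.mem_insert.mp i.2 with hi | hi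
    · have : i = ⟨j, Finset.mem_insert_self j ι⟩ := Subtype.ext hi
      rw [this]; exact h.2
    · have := congrFun h.1 ⟨i.1, hi⟩
      simpa [Subtype.ext_iff] using this
  have hg2 : Function.Injective (fun p : S × (∀ i : ↥(insert j ι), W i) =>
      ((fun i : ↥ι => p.2 ⟨i.1, Finset.mem_insert_of_mem i.2⟩),
       p.2 ⟨j, Finset.mem_insert_self j ι⟩, p.1)) := by
    intro p₁ p₂ h
    simp only [Prod.mk.injEq] at h
    exact Prod.ext h.2.2 (hg1 (Prod.mk.injEq .. ▸ ⟨h.1, h.2.1⟩ : _))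
  have hY' : μ.entropy (tupleRV ωs (insert j ι)) =
      μ.entropy (fun x => (tupleRV ωs ι x, ωs j x)) :=
    (μ.entropy_comp_inj (tupleRV ωs (insert j ι)) hg1).symm
  have hsY' : μ.entropy (fun x => (s x, tupleRV ωs (insert j ι) x)) =
      μ.entropy (fun x => (tupleRV ωs ι x, ωs j x, s x)) :=
    (μ.entropy_comp_inj (fun x => (s x, tupleRV ωs (insert j ι) x)) hg2).symm
  have hsY : μ.entropy (fun x => (s x, tupleRV ωs ι x)) =
      μ.entropy (fun x => (tupleRV ωs ι x, s x)) :=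
    μ.entropy_pair_comm s (tupleRV ωs ι)
  have hcond : ∀ (a : ∀ i : ↥ι, W i) (b : W j) (v : S),
      μ.probEq (fun x => (tupleRV ωs ι x, ωs j x, s x)) (a, b, v) * μ.probEq s v =
        μ.probEq (fun x => (tupleRV ωs ι x, s x)) (a, v) *
          μ.probEq (fun x => (ωs j x, s x)) (b, v) := by
    intro a b v
    have hdisj : Disjoint ι ({j} : Finset (Fin n)) := Finset.disjoint_singleton_right.mpr hj
    set b' : ∀ i : ({j} : Finset (Fin n)), W i :=
      fun i => cast (congrArg W (Finset.mem_singleton.mp i.2).symm) b with hb'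
    have hb : b' ⟨j, Finset.mem_singleton_self j⟩ = b := eq_of_heq (cast_heq _ _)
    have hg3 : Function.Injective
        (fun q : (∀ i : ↥ι, W i) × (∀ i : ({j} : Finset (Fin n)), W i) × S =>
          (q.1, q.2.1 ⟨j, Finset.mem_singleton_self j⟩, q.2.2)) := by
      intro q₁ q₂ h
      simp only [Prod.mk.injEq] at h
      refine Prod.ext h.1 (Prod.ext ?_ h.2.2)
      funext i
      have : i = ⟨j, Finset.mem_singleton_self j⟩ :=
        Subtype.ext (Finset.mem_singleton.mp i.2)
      rw [this]; exact h.2.1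
    have hg4 : Function.Injective
        (fun q : (∀ i : ({j} : Finset (Fin n)), W i) × S =>
          (q.1 ⟨j, Finset.mem_singleton_self j⟩, q.2)) := by
      intro q₁ q₂ h
      simp only [Prod.mk.injEq] at h
      refine Prod.ext ?_ h.2
      funext i
      have : i = ⟨j, Finset.mem_singleton_self j⟩ :=
        Subtype.ext (Finset.mem_singleton.mp i.2)
      rw [this]; exact h.1
    have T3 : μ.probEq (fun x => (tupleRV ωs ι x, ωs j x, s x)) (a, b, v) =
        μ.probEq (fun x => (tupleRV ωs ι x, tupleRV ωs {j} x, s x)) (a, b', v) := by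
      rw [← hb]
      exact μ.probEq_comp_inj
        (fun x => (tupleRV ωs ι x, tupleRV ωs ({j} : Finset (Fin n)) x, s x)) hg3 (a, b', v)
    have T2 : μ.probEq (fun x => (ωs j x, s x)) (b, v) =
        μ.probEq (fun x => (tupleRV ωs ({j} : Finset (Fin n)) x, s x)) (b', v) := by
      rw [← hb]
      exact μ.probEq_comp_inj
        (fun x => (tupleRV ωs ({j} : Finset (Fin n)) x, s x)) hg4 (b', v)
    rw [T3, T2]
    exact hindep ι {j} hdisj a b' v
  have hE := μ.entropy_triple_of_condIndep (tupleRV ωs ι) (ωs j) s hcond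
  unfold FinProb.mutualInfo FinProb.condEntropy
  linarith [hY', hsY', hsY, hE]

end FinProb

set_option maxHeartbeats 1000000 in
/-- For mutually conditionally independent observations given `s`, the set
function `f(ι) = I(s; ∪_{i∈ι} ω^i)` is submodular: for all `ι₁ ⊆ ι₂ ⊂ {1,…,n}` and `j ∉ ι₂`,
`f(ι₁∪{j}) − f(ι₁) ≥ f(ι₂∪{j}) − f(ι₂)`. -/
theorem mutualInfo_submodular
    {Ω : Type*} [Fintype Ω] (μ : FinProb Ω)
    {S : Type*} [Fintype S] [DecidableEq S]
    {n : ℕ} {W : Fin n → Type*} [∀ i, Fintype (W i)] [∀ i, DecidableEq (W i)]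
    (s : Ω → S) (ωs : ∀ i, Ω → W i)
    (hindep : CondIndepGiven μ s ωs)
    (ι₁ ι₂ : Finset (Fin n)) (h12 : ι₁ ⊆ ι₂) (h2 : ι₂ ⊂ Finset.univ)
    (j : Fin n) (hj : j ∉ ι₂) :
    μ.mutualInfo s (tupleRV ωs (insert j ι₁)) - μ.mutualInfo s (tupleRV ωs ι₁) ≥
      μ.mutualInfo s (tupleRV ωs (insert j ι₂)) - μ.mutualInfo s (tupleRV ωs ι₂) := by
  have h1 := μ.mutualInfo_insert_diff s ωs hindep ι₁ j (fun h => hj (h12 h))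
  have h2' := μ.mutualInfo_insert_diff s ωs hindep ι₂ j hj
  have h3 := μ.entropy_union_pair ωs ι₁ (ι₂ \ ι₁) (ωs j)
  rw [Finset.union_sdiff_of_subset h12] at h3
  linarith [h1, h2', h3]
end

section
/- Let f : 2^{1,…,n} → ℝ be a monotone nondecreasing submodular set function with f(∅) = 0, let c¹,…,cⁿ > 0 be costs and c̄ > 0 a budget. Consider the generalized greedy algorithm (with cost-scaling exponent β = 1): starting from the empty set, repeatedly select among unexamined elements the element j* maximizing the cost-scaled marginal gain (f(ι̃∪{j}) − f(ι̃)) / c^j over j not yet in the current set ι̃, add j* to ι̃ if the total cost of ι̃∪{j*} does not exceed c̄, and in any case remove j* from further consideration; upon termination output ι^g, the better (with respect to f) of the constructed set ι̃ and the best feasible singleton {j₁*} where j₁* maximizes f({j}) over j with c^j ≤ c̄. Then f(ι^g) ≥ (1 − 1/√e) · f(ι*), where ι* is an optimal solution of maximizing f(ι) subject to Σ_{i∈ι} c^i ≤ c̄. -/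
open Finset

/-- An element of the finite set `X` maximizing `g` (ties broken by choice). -/
noncomputable def argmaxIn {n : ℕ} (X : Finset (Fin n)) (g : Fin n → ℝ) (h : X.Nonempty) :
    Fin n :=
  Classical.choose (Finset.exists_max_image X g h)

lemma argmaxIn_mem {n : ℕ} (X : Finset (Fin n)) (g : Fin n → ℝ) (h : X.Nonempty) :
    argmaxIn X g h ∈ X :=
  (Classical.choose_spec (Finset.exists_max_image X g h)).1

/-- The main loop of the generalized greedy algorithm (cost-scaling exponent `β = 1`):
given the set `Xt` of not-yet-examined elements and the current set `ιt`, repeatedly select among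
the unexamined elements the element `j*` maximizing the cost-scaled marginal gain
`(f(ιt ∪ {j}) − f(ιt)) / c j`, add `j*` to `ιt` whenever the total cost of `ιt ∪ {j*}` does not
exceed the budget `cbar`, and in any case remove `j*` from further consideration. -/
noncomputable def greedyLoop {n : ℕ} (f : Finset (Fin n) → ℝ) (c : Fin n → ℝ) (cbar : ℝ) :
    Finset (Fin n) → Finset (Fin n) → Finset (Fin n) := fun Xt ιt =>
  if h : Xt.Nonempty then
    let j := argmaxIn Xt (fun j => (f (insert j ιt) - f ιt) / c j) h
    greedyLoop f c cbar (Xt.erase j)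
      (if (∑ i ∈ ιt, c i) + c j ≤ cbar then insert j ιt else ιt)
  else ιt
termination_by Xt => Xt.card
decreasing_by
  exact Finset.card_erase_lt_of_mem (argmaxIn_mem _ _ h)

/-- The output `ι^g` of the generalized greedy algorithm: the better (w.r.t. `f`) of the set
constructed by the greedy loop (started from the empty set with all elements unexamined) and the
best feasible singleton `{j₁*}`, where `j₁*` maximizes `f {j}` over the `j` with `c j ≤ cbar`. -/
noncomputable def greedyOutput {n : ℕ} (f : Finset (Fin n) → ℝ) (c : Fin n → ℝ) (cbar : ℝ) :
    Finset (Fin n) :=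
  let ιt := greedyLoop f c cbar Finset.univ ∅
  if h : (Finset.univ.filter fun j : Fin n => c j ≤ cbar).Nonempty then
    let j₁ := argmaxIn _ (fun j => f {j}) h
    if f ιt ≤ f {j₁} then {j₁} else ιt
  else ιt

/-!
While no element of a feasible set `ι*` has been rejected, every element of `ι* \ ι` is still
unexamined, so by submodularity the greedy pick has gain per unit cost at least
`(f ι* - f ι) / c̄`, and the gap `f ι* - f ι` decays like `exp (-cost ι / c̄)`. If the greedy set
has spent half the budget when the first element `d₁ ∈ ι*` is rejected, this already gives
`1 - e^{-1/2}`. Otherwise `c d₁ > c̄ / 2`, and the same argument applies to `ι* \ {d₁}` with budget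
`c̄ - c d₁` and target `f ι* - h₁`, where `h₁ ≤ f {d₁}` is the gain of `d₁` at its rejection, until
a second element of `ι*` is rejected; that happens only after the greedy set has spent more than
`c d₁`. Balancing the two phases against the best singleton gives the bound.
-/

open Real

lemma argmaxIn_spec {n : ℕ} (X : Finset (Fin n)) (g : Fin n → ℝ) (h : X.Nonempty) :
    ∀ x ∈ X, g x ≤ g (argmaxIn X g h) :=
  (Classical.choose_spec (Finset.exists_max_image X g h)).2

def IsSubmodular {α : Type*} [DecidableEq α] (f : Finset α → ℝ) : Prop :=
  ∀ ⦃A C : Finset α⦄, A ⊆ C → ∀ ⦃i : α⦄, i ∉ C → f (insert i C) - f C ≤ f (insert i A) - f A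

theorem isSubmodular_of_forall_sub_le {α : Type*} [DecidableEq α] [Fintype α]
    {f : Finset α → ℝ}
    (h : ∀ T₁ T₂ : Finset α, T₁ ⊆ T₂ → T₂ ⊂ univ → ∀ i ∉ T₂,
      f (insert i T₁) - f T₁ ≥ f (insert i T₂) - f T₂) :
    IsSubmodular f := fun A C hAC i hi =>
  h A C hAC (ssubset_univ_iff.mpr fun hC => hi (hC ▸ mem_univ i)) i hi

namespace IsSubmodular

variable {α : Type*} [DecidableEq α] {f : Finset α → ℝ}

theorem le_add_sum_marginal (hf : IsSubmodular f) (S T : Finset α) :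
    f (S ∪ T) ≤ f S + ∑ j ∈ T \ S, (f (insert j S) - f S) := by
  induction T using Finset.induction_on with
  | empty => simp
  | @insert a T ha ih =>
    by_cases haS : a ∈ S
    · rwa [union_insert, insert_eq_of_mem (mem_union_left T haS), insert_sdiff_of_mem _ haS]
    · have hmarg := hf (subset_union_left (s₂ := T)) (by simp [haS, ha] : a ∉ S ∪ T)
      rw [union_insert, insert_sdiff_of_notMem _ haS, sum_insert (by simp [ha])]
      linarith

theorem sub_le_sum_marginal (hf : IsSubmodular f) (hmono : Monotone f) (S T : Finset α) :
    f T - f S ≤ ∑ j ∈ T \ S, (f (insert j S) - f S) := by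
  linarith [hf.le_add_sum_marginal S T, hmono (subset_union_right : T ⊆ S ∪ T)]

theorem sub_le_sum_marginal_erase (hf : IsSubmodular f) (hmono : Monotone f)
    {R S T : Finset α} {d : α} (hdR : d ∈ R) (hST : S ⊆ T) (hdT : d ∉ T) :
    f R - (f (insert d S) - f S) - f T ≤ ∑ j ∈ R.erase d \ T, (f (insert j T) - f T) := by
  have hsum := hf.sub_le_sum_marginal hmono T R
  rw [← add_sum_erase _ _ (mem_sdiff.mpr ⟨hdR, hdT⟩), ← erase_sdiff_comm] at hsum
  linarith [hf hST hdT]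

end IsSubmodular

theorem sum_le_sum_mul_of_div_le {ι : Type*} {s : Finset ι} {g c : ι → ℝ} {ρ : ℝ}
    (hc : ∀ i ∈ s, 0 < c i) (h : ∀ i ∈ s, g i / c i ≤ ρ) :
    ∑ i ∈ s, g i ≤ (∑ i ∈ s, c i) * ρ := by
  rw [sum_mul]
  exact sum_le_sum fun i hi => by rw [mul_comm]; exact (div_le_iff₀ (hc i hi)).mp (h i hi)

theorem sub_le_mul_exp_neg_of_le_mul_div {g Δ a W : ℝ} (hg : 0 < g) (hΔ : 0 ≤ Δ) (ha : 0 < a)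
    (h : g ≤ W * (Δ / a)) : g - Δ ≤ g * exp (-(a / W)) := by
  have hW : 0 < W := by
    by_contra! hW
    linarith [mul_nonpos_of_nonpos_of_nonneg hW (div_nonneg hΔ ha.le)]
  have hgain : g * (a / W) ≤ Δ :=
    calc g * (a / W) ≤ W * (Δ / a) * (a / W) := by gcongr
      _ = Δ := by field_simp
  calc g - Δ ≤ g * (-(a / W) + 1) := by linarith
    _ ≤ g * exp (-(a / W)) := by gcongr; exact add_one_le_exp _

section GreedyLoop

variable {n : ℕ} {f : Finset (Fin n) → ℝ} {c : Fin n → ℝ} {cbar : ℝ}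

noncomputable def greedyPick (f : Finset (Fin n) → ℝ) (c : Fin n → ℝ) (X ι : Finset (Fin n))
    (hX : X.Nonempty) : Fin n :=
  argmaxIn X (fun j => (f (insert j ι) - f ι) / c j) hX

theorem greedyLoop_of_nonempty {X : Finset (Fin n)} (ι : Finset (Fin n)) (hX : X.Nonempty) :
    greedyLoop f c cbar X ι =
      greedyLoop f c cbar (X.erase (greedyPick f c X ι hX))
        (if ∑ i ∈ ι, c i + c (greedyPick f c X ι hX) ≤ cbar
          then insert (greedyPick f c X ι hX) ι else ι) := by
  rw [greedyLoop, dif_pos hX]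
  rfl

theorem subset_greedyLoop (X ι : Finset (Fin n)) : ι ⊆ greedyLoop f c cbar X ι := by
  induction X using Finset.strongInductionOn generalizing ι with
  | _ X ih =>
    by_cases hX : X.Nonempty
    · rw [greedyLoop_of_nonempty ι hX]
      have hXj : X.erase (greedyPick f c X ι hX) ⊂ X := erase_ssubset (argmaxIn_mem _ _ hX)
      split_ifs
      · exact (subset_insert _ ι).trans (ih _ hXj _)
      · exact ih _ hXj _
    · rw [greedyLoop, dif_neg hX]

theorem sub_insert_greedyPick_le (hmono : Monotone f) (hc : ∀ i, 0 < c i)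
    {R X ι : Finset (Fin n)} {V W : ℝ} (hRW : ∑ i ∈ R, c i ≤ W) (hX : X.Nonempty)
    (hRX : R \ ι ⊆ X) (hV : f ι < V)
    (hgap : V - f ι ≤ ∑ j ∈ R \ ι, (f (insert j ι) - f ι)) :
    V - f (insert (greedyPick f c X ι hX) ι) ≤
      (V - f ι) * exp (-(c (greedyPick f c X ι hX) / W)) := by
  set j := greedyPick f c X ι hX
  have hdensity : ∑ i ∈ R \ ι, (f (insert i ι) - f ι) ≤
      (∑ i ∈ R \ ι, c i) * ((f (insert j ι) - f ι) / c j) :=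
    sum_le_sum_mul_of_div_le (fun i _ => hc i) fun i hi =>
      argmaxIn_spec X (fun j => (f (insert j ι) - f ι) / c j) hX i (hRX hi)
  have hcost : ∑ i ∈ R \ ι, c i ≤ W :=
    (sum_le_sum_of_subset_of_nonneg sdiff_subset fun i _ _ => (hc i).le).trans hRW
  have hgain : 0 ≤ f (insert j ι) - f ι := sub_nonneg.mpr (hmono (subset_insert j ι))
  have hkey : V - f ι ≤ W * ((f (insert j ι) - f ι) / c j) :=
    hgap.trans (hdensity.trans (by gcongr; exact div_nonneg hgain (hc j).le))
  linarith [sub_le_mul_exp_neg_of_le_mul_div (sub_pos.mpr hV) hgain (hc j) hkey]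

/-- `Y` and `S` are the unexamined set and the current set at the moment `d ∈ R` is rejected. -/
theorem le_greedyLoop_or_exists_skip (hmono : Monotone f) (hc : ∀ i, 0 < c i)
    (R : Finset (Fin n)) (V W : ℝ) (hRW : ∑ i ∈ R, c i ≤ W) (X ι : Finset (Fin n))
    (hXι : Disjoint X ι) (hRX : R \ ι ⊆ X)
    (hgap : ∀ T, ι ⊆ T → T ⊆ ι ∪ X → V - f T ≤ ∑ j ∈ R \ T, (f (insert j T) - f T)) :
    V ≤ f (greedyLoop f c cbar X ι) ∨
      ∃ Y S d, d ∈ R ∧ d ∈ Y ∧ Disjoint Y S ∧ R \ S ⊆ Y ∧ cbar < ∑ i ∈ S, c i + c d ∧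
        greedyLoop f c cbar X ι = greedyLoop f c cbar (Y.erase d) S ∧
        V - f S ≤ (V - f ι) * exp (-((∑ i ∈ S, c i - ∑ i ∈ ι, c i) / W)) := by
  induction X using Finset.strongInductionOn generalizing ι with
  | _ X ih =>
  by_cases hV : V ≤ f ι
  · exact Or.inl (hV.trans (hmono (subset_greedyLoop X ι)))
  push Not at hV
  have hX : X.Nonempty := by
    by_contra hX
    have hRι : R \ ι = ∅ := subset_empty.mp (not_nonempty_iff_eq_empty.mp hX ▸ hRX)
    have hclosed := hgap ι subset_rfl subset_union_left
    rw [hRι, sum_empty] at hclosed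
    linarith
  rw [greedyLoop_of_nonempty ι hX]
  set j := greedyPick f c X ι hX
  have hjX : j ∈ X := argmaxIn_mem _ _ hX
  have hjι : j ∉ ι := disjoint_left.mp hXι hjX
  have hXj : X.erase j ⊂ X := erase_ssubset hjX
  split_ifs with hfit
  · have hdecay := sub_insert_greedyPick_le hmono hc hRW hX hRX hV
      (hgap ι subset_rfl subset_union_left)
    have hXι' : Disjoint (X.erase j) (insert j ι) :=
      disjoint_insert_right.mpr ⟨notMem_erase j X, hXι.mono_left (erase_subset j X)⟩
    have hRX' : R \ insert j ι ⊆ X.erase j := fun x hx => by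
      simp only [mem_sdiff, mem_insert, not_or] at hx
      exact mem_erase.mpr ⟨hx.2.1, hRX (mem_sdiff.mpr ⟨hx.1, hx.2.2⟩)⟩
    have hrange : insert j ι ∪ X.erase j ⊆ ι ∪ X :=
      union_subset (insert_subset (mem_union_right _ hjX) subset_union_left)
        ((erase_subset j X).trans subset_union_right)
    rcases ih _ hXj (insert j ι) hXι' hRX'
        (fun T h₁ h₂ => hgap T ((subset_insert j ι).trans h₁) (h₂.trans hrange)) with
      hdone | ⟨Y, S, d, hdR, hdY, hYS, hRS, hskip, hloop, hS⟩
    · exact Or.inl hdone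
    refine Or.inr ⟨Y, S, d, hdR, hdY, hYS, hRS, hskip, hloop, ?_⟩
    calc V - f S
        ≤ (V - f (insert j ι)) * exp (-((∑ i ∈ S, c i - ∑ i ∈ insert j ι, c i) / W)) := hS
      _ ≤ (V - f ι) * exp (-(c j / W)) *
            exp (-((∑ i ∈ S, c i - ∑ i ∈ insert j ι, c i) / W)) := by gcongr
      _ = (V - f ι) * exp (-((∑ i ∈ S, c i - ∑ i ∈ ι, c i) / W)) := by
        rw [mul_assoc, ← exp_add, sum_insert hjι]
        ring_nf
  · by_cases hjR : j ∈ R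
    · exact Or.inr ⟨X, ι, j, hjR, hjX, hXι, hRX, not_le.mp hfit, rfl, by simp⟩
    exact ih _ hXj ι (hXι.mono_left (erase_subset j X))
      (fun x hx => mem_erase.mpr ⟨fun h => hjR (h ▸ (mem_sdiff.mp hx).1), hRX hx⟩)
      (fun T h₁ h₂ => hgap T h₁ (h₂.trans (union_subset_union_right (erase_subset j X))))

end GreedyLoop

theorem four_sevenths_lt_exp_neg_half : 4 / 7 < exp (-(1 / 2)) := by
  have hsq : exp (1 / 2) * exp (1 / 2) = exp 1 := by rw [← exp_add]; norm_num
  have hinv : exp (-(1 / 2)) * exp (1 / 2) = 1 := by rw [← exp_add]; norm_num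
  nlinarith [exp_one_lt_d9, exp_pos (1 / 2), exp_pos (-(1 / 2))]

/-- The tangent line of `s ↦ s * exp (-s)` at `s = 1/2`. -/
theorem mul_exp_neg_le_tangent {s : ℝ} (hs : 0 ≤ s) :
    s * exp (-s) ≤ exp (-(1 / 2)) / 2 * (s + 1 / 2) := by
  have hexp : (s + 1 / 2) * exp (-s) ≤ exp (-(1 / 2)) := by
    have h := mul_le_mul_of_nonneg_right (add_one_le_exp (s - 1 / 2)) (exp_pos (-s)).le
    rwa [← exp_add, show s - 1 / 2 + -s = -(1 / 2) by ring, show s - 1 / 2 + 1 = s + 1 / 2 by ring]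
      at h
  nlinarith [mul_nonneg (sq_nonneg (s - 1 / 2)) (exp_pos (-s)).le,
    mul_le_mul_of_nonneg_left hexp (by linarith : 0 ≤ s + 1 / 2)]

theorem exp_neg_sub_mul_exp_le {s y : ℝ} (hs : 0 < s) (hs₂ : s ≤ 1 / 2)
    (hy : (1 - s) / s - 1 ≤ y) :
    (exp (-s) - (1 - exp (-(1 / 2)))) * exp (-y) ≤ 2 * exp (-(1 / 2)) - 1 := by
  set E := exp (-(1 / 2))
  have hE := four_sevenths_lt_exp_neg_half
  have hP : 0 ≤ exp (-s) - (1 - E) := by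
    have : E ≤ exp (-s) := exp_le_exp.mpr (by linarith)
    linarith
  have hq : exp (-y) ≤ s / (1 - s) := by
    rw [exp_neg, inv_le_comm₀ (exp_pos y) (div_pos hs (by linarith)), inv_div]
    linarith [add_one_le_exp y]
  have hcore : (exp (-s) - (1 - E)) * s ≤ (2 * E - 1) * (1 - s) := by
    nlinarith [mul_exp_neg_le_tangent hs.le,
      mul_nonneg (by linarith : (0 : ℝ) ≤ 7 * E / 4 - 1) (by linarith : (0 : ℝ) ≤ 1 - 2 * s)]
  calc (exp (-s) - (1 - E)) * exp (-y) ≤ (exp (-s) - (1 - E)) * (s / (1 - s)) := by gcongr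
    _ ≤ 2 * E - 1 := by
      rw [← mul_div_assoc, div_le_iff₀ (by linarith)]
      exact hcore

/-- `b` is the budget, `x₁` the cost of the greedy set when the first optimal element (of cost `a`)
is rejected, `x₂` its cost when the second one is rejected. -/
theorem two_phase_bound {opt M h A B x₁ x₂ a b : ℝ} (hb : 0 < b) (hopt : 0 ≤ opt) (ha : a < b)
    (hx₁ : b < x₁ + a) (hx₂ : a ≤ x₂)
    (hA : opt - A ≤ opt * exp (-(x₁ / b)))
    (hB : opt - h - B ≤ (opt - h - A) * exp (-((x₂ - x₁) / (b - a))))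
    (hAM : A ≤ M) (hBM : B ≤ M) (hhM : h ≤ M) :
    (1 - exp (-(1 / 2))) * opt ≤ M := by
  set E := exp (-(1 / 2))
  have hE := four_sevenths_lt_exp_neg_half
  by_contra! hM
  have hhalf : (1 - E) * opt ≤ opt / 2 := by nlinarith
  rcases le_or_gt (b / 2) x₁ with hx₁b | hx₁b
  · have hexp : exp (-(x₁ / b)) ≤ E :=
      exp_le_exp.mpr (neg_le_neg ((le_div_iff₀ hb).mpr (by linarith)))
    nlinarith [mul_le_mul_of_nonneg_left hexp hopt]
  have hgap : 0 ≤ opt - h - A := by linarith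
  set s := x₁ / b
  set q := exp (-((x₂ - x₁) / (b - a)))
  have hs : 0 < s := div_pos (by linarith) hb
  have hs₂ : s ≤ 1 / 2 := (div_le_iff₀ hb).mpr (by linarith)
  have hy : (1 - s) / s - 1 ≤ (x₂ - x₁) / (b - a) :=
    calc (1 - s) / s - 1 = (b - x₁) / x₁ - 1 := by
          simp only [s]; field_simp
      _ ≤ (b - x₁) / (b - a) - 1 := by gcongr <;> linarith
      _ = (a - x₁) / (b - a) := by field_simp [(by linarith : b - a ≠ 0)]; ring
      _ ≤ (x₂ - x₁) / (b - a) := by gcongr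
  have hcore := exp_neg_sub_mul_exp_le hs hs₂ hy
  have hq : q ≤ 1 := exp_le_one_iff.mpr (neg_nonpos.mpr (div_nonneg (by linarith) (by linarith)))
  have h₁ : (opt - h - A) * q ≤ (opt * exp (-s) - h) * q :=
    mul_le_mul_of_nonneg_right (by linarith) (exp_pos _).le
  have h₂ : h * (1 - q) ≤ (1 - E) * opt * (1 - q) :=
    mul_le_mul_of_nonneg_right (by linarith) (by linarith)
  nlinarith [mul_le_mul_of_nonneg_left hcore hopt]

section Guarantee

variable {n : ℕ} {f : Finset (Fin n) → ℝ} {c : Fin n → ℝ} {cbar : ℝ}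

theorem one_sub_exp_neg_half_mul_le (hmono : Monotone f) (hsub : IsSubmodular f)
    (hempty : f ∅ = 0) (hc : ∀ i, 0 < c i) (hcbar : 0 < cbar) {ιstar : Finset (Fin n)}
    (hfeas : ∑ i ∈ ιstar, c i ≤ cbar) {M : ℝ} (hloop : f (greedyLoop f c cbar univ ∅) ≤ M)
    (hsingleton : ∀ j ∈ ιstar, f {j} ≤ M) :
    (1 - exp (-(1 / 2))) * f ιstar ≤ M := by
  have hopt : 0 ≤ f ιstar := hempty ▸ hmono (empty_subset ιstar)
  have hE := four_sevenths_lt_exp_neg_half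
  rcases le_greedyLoop_or_exists_skip (cbar := cbar) hmono hc ιstar (f ιstar) cbar hfeas univ ∅
      (disjoint_empty_right _) (subset_univ _)
      (fun T _ _ => hsub.sub_le_sum_marginal hmono T ιstar)
    with hdone | ⟨Y₁, S₁, d₁, hd₁, hd₁Y, hYS₁, hRS₁, hskip₁, hloop₁, hS₁⟩
  · nlinarith
  set h₁ := f (insert d₁ S₁) - f S₁
  have hd₁S₁ : d₁ ∉ S₁ := disjoint_left.mp hYS₁ hd₁Y
  have hh₁ : h₁ ≤ M := by
    have := hsub (empty_subset S₁) hd₁S₁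
    rw [insert_empty, hempty, sub_zero] at this
    linarith [hsingleton d₁ hd₁]
  have hcost₂ : ∑ i ∈ ιstar.erase d₁, c i ≤ cbar - c d₁ := by
    rw [sum_erase_eq_sub hd₁]; linarith
  have hRY₁ : ιstar.erase d₁ \ S₁ ⊆ Y₁.erase d₁ := fun x hx => by
    rw [erase_sdiff_comm] at hx
    exact mem_erase.mpr ⟨ne_of_mem_erase hx, hRS₁ (mem_of_mem_erase hx)⟩
  rcases le_greedyLoop_or_exists_skip (cbar := cbar) hmono hc (ιstar.erase d₁) (f ιstar - h₁)
      (cbar - c d₁) hcost₂ (Y₁.erase d₁) S₁ (hYS₁.mono_left (erase_subset _ _)) hRY₁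
      (fun T hS₁T hT => hsub.sub_le_sum_marginal_erase hmono hd₁ hS₁T
        fun h => by simpa [hd₁S₁] using hT h)
    with hdone | ⟨Y₂, S₂, d₂, hd₂, -, -, -, hskip₂, hloop₂, hS₂⟩
  · nlinarith [hloop₁ ▸ hloop]
  have hpair : c d₁ + c d₂ ≤ cbar := by
    have hsubset : {d₁, d₂} ⊆ ιstar :=
      insert_subset hd₁ (singleton_subset_iff.mpr (mem_of_mem_erase hd₂))
    have := sum_le_sum_of_subset_of_nonneg hsubset fun i _ _ => (hc i).le
    rw [sum_pair (ne_of_mem_erase hd₂).symm] at this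
    linarith
  refine two_phase_bound hcbar hopt (b := cbar) (a := c d₁) (by linarith [hc d₂]) hskip₁
    (by linarith) (by simpa [hempty] using hS₁) hS₂ ?_ ?_ hh₁
  · exact (hmono (subset_greedyLoop _ _)).trans (hloop₁ ▸ hloop)
  · exact (hmono (subset_greedyLoop _ _)).trans (hloop₂ ▸ hloop₁ ▸ hloop)

theorem greedyLoop_le_greedyOutput :
    f (greedyLoop f c cbar univ ∅) ≤ f (greedyOutput f c cbar) := by
  simp only [greedyOutput]
  split_ifs with _ hle
  · exact hle
  all_goals exact le_rfl

theorem singleton_le_greedyOutput {j : Fin n} (hj : c j ≤ cbar) :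
    f {j} ≤ f (greedyOutput f c cbar) := by
  have hj' : j ∈ univ.filter fun j => c j ≤ cbar := by simpa using hj
  have hmax := argmaxIn_spec _ (fun j => f {j}) ⟨j, hj'⟩ j hj'
  simp only [greedyOutput]
  split_ifs with hne hle
  · exact hmax
  · linarith
  · exact absurd ⟨j, hj'⟩ hne

end Guarantee

theorem generalized_greedy_guarantee_general {n : ℕ}
    (f : Finset (Fin n) → ℝ) (c : Fin n → ℝ) (cbar : ℝ)
    (hmono : ∀ T₁ T₂ : Finset (Fin n), T₁ ⊆ T₂ → f T₁ ≤ f T₂)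
    (hsubmod : ∀ T₁ T₂ : Finset (Fin n), T₁ ⊆ T₂ → T₂ ⊂ Finset.univ → ∀ i ∉ T₂,
      f (insert i T₁) - f T₁ ≥ f (insert i T₂) - f T₂)
    (hempty : f ∅ = 0)
    (hc : ∀ i, 0 < c i) (hcbar : 0 < cbar)
    (ιstar : Finset (Fin n))
    (hfeas : ∑ i ∈ ιstar, c i ≤ cbar) :
    f (greedyOutput f c cbar) ≥ (1 - 1 / Real.sqrt (Real.exp 1)) * f ιstar := by
  rw [← exp_half, one_div, ← exp_neg]
  exact one_sub_exp_neg_half_mul_le (fun _ _ h => hmono _ _ h)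
    (isSubmodular_of_forall_sub_le hsubmod) hempty hc hcbar hfeas greedyLoop_le_greedyOutput
    fun j hj => singleton_le_greedyOutput ((single_le_sum (fun i _ => (hc i).le) hj).trans hfeas)

/-- Let `f` be a monotone nondecreasing submodular set function with `f ∅ = 0`,
`c` positive costs and `cbar > 0` a budget. The output `ι^g` of the generalized greedy algorithm
(with cost-scaling exponent `β = 1`) satisfies `f(ι^g) ≥ (1 − 1/√e) · f(ι*)`, where `ι*` is an
optimal solution of maximizing `f(ι)` subject to `Σ_{i∈ι} c i ≤ cbar`. -/
theorem generalized_greedy_guarantee {n : ℕ}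
    (f : Finset (Fin n) → ℝ) (c : Fin n → ℝ) (cbar : ℝ)
    (hmono : ∀ T₁ T₂ : Finset (Fin n), T₁ ⊆ T₂ → f T₁ ≤ f T₂)
    (hsubmod : ∀ T₁ T₂ : Finset (Fin n), T₁ ⊆ T₂ → T₂ ⊂ Finset.univ → ∀ i ∉ T₂,
      f (insert i T₁) - f T₁ ≥ f (insert i T₂) - f T₂)
    (hempty : f ∅ = 0)
    (hc : ∀ i, 0 < c i) (hcbar : 0 < cbar)
    (ιstar : Finset (Fin n))
    (hfeas : ∑ i ∈ ιstar, c i ≤ cbar)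
    (hopt : ∀ ι : Finset (Fin n), ∑ i ∈ ι, c i ≤ cbar → f ι ≤ f ιstar) :
    f (greedyOutput f c cbar) ≥ (1 - 1 / Real.sqrt (Real.exp 1)) * f ιstar :=
  generalized_greedy_guarantee_general f c cbar hmono hsubmod hempty hc hcbar ιstar hfeas
end
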